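/- The function F(x) = ((k+1)/cosh²(kx))^(1/(2k)) is a positive solution of the ODE −F'' − F^(2k+1) = −F on ℝ, for any real k > 0. -/

import Mathlib

/-!
Write `F = c * cosh (k x) ^ p` with `c = (k + 1) ^ (1 / (2k))` and `p = -1 / k`. Using
`sinh² = cosh² - 1`, the second derivative of `c * cosh (a x) ^ p` is
`c p a² (p cosh (a x) ^ p + (1 - p) cosh (a x) ^ (p - 2))`. For `a = k` we have `p k = -1`, so
`F'' = F - (k + 1) c cosh (k x) ^ (p - 2)`, and the last term is `F ^ (2k + 1)` because
`c ^ (2k) = k + 1` and `p (2k + 1) = p - 2`.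
-/

open Real

lemma hasDerivAt_const_mul_cosh_mul_rpow (c a p x : ℝ) :
    HasDerivAt (fun x => c * cosh (a * x) ^ p)
      (c * p * a * (sinh (a * x) * cosh (a * x) ^ (p - 1))) x := by
  refine ((((hasDerivAt_id' x).const_mul a).cosh.rpow_const (p := p)
    (Or.inl (cosh_pos (a * x)).ne')).const_mul c).congr_deriv ?_
  ring

lemma deriv_const_mul_cosh_mul_rpow (c a p : ℝ) :
    deriv (fun x => c * cosh (a * x) ^ p) =
      fun x => c * p * a * (sinh (a * x) * cosh (a * x) ^ (p - 1)) :=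
  funext fun x => (hasDerivAt_const_mul_cosh_mul_rpow c a p x).deriv

lemma deriv_deriv_const_mul_cosh_mul_rpow (c a p x : ℝ) :
    deriv (deriv fun x => c * cosh (a * x) ^ p) x =
      c * p * a ^ 2 * (p * cosh (a * x) ^ p + (1 - p) * cosh (a * x) ^ (p - 2)) := by
  have hy := cosh_pos (a * x)
  have hsinh : HasDerivAt (fun x => sinh (a * x)) (cosh (a * x) * a) x := by
    simpa using ((hasDerivAt_id' x).const_mul a).sinh
  have hcosh := hasDerivAt_const_mul_cosh_mul_rpow 1 a (p - 1) x
  simp only [one_mul] at hcosh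
  rw [deriv_const_mul_cosh_mul_rpow, ((hsinh.fun_mul hcosh).const_mul (c * p * a)).deriv]
  have hsub_one : cosh (a * x) ^ p = cosh (a * x) * cosh (a * x) ^ (p - 1) := by
    rw [rpow_sub_one hy.ne', mul_div_cancel₀ _ hy.ne']
  have hsub_two : cosh (a * x) ^ (p - 1 - 1) = cosh (a * x) ^ (p - 2) := by ring_nf
  have hsq_mul : cosh (a * x) ^ p = cosh (a * x) ^ 2 * cosh (a * x) ^ (p - 2) := by
    rw [rpow_sub hy, rpow_two, mul_div_cancel₀ _ (by positivity)]
  rw [hsub_two]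
  linear_combination -(c * p * a ^ 2) * hsub_one - (c * p * a ^ 2 * (p - 1)) * hsq_mul +
    (c * p * a ^ 2 * (p - 1) * cosh (a * x) ^ (p - 2)) * sinh_sq (a * x)

lemma div_sq_rpow_one_div_two_mul {A y : ℝ} (hA : 0 ≤ A) (hy : 0 < y) (k : ℝ) :
    (A / y ^ 2) ^ (1 / (2 * k)) = A ^ (1 / (2 * k)) * y ^ (-1 / k) := by
  rw [div_rpow hA (by positivity), ← rpow_natCast, ← rpow_mul hy.le, div_eq_mul_inv,
    ← rpow_neg hy.le]
  congr 2
  push_cast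
  field_simp

section NLSProfile

noncomputable def nlsProfile (k x : ℝ) : ℝ :=
  (k + 1) ^ (1 / (2 * k)) * cosh (k * x) ^ (-1 / k)

variable {k : ℝ}

lemma nlsProfile_pos (hk : -1 < k) (x : ℝ) : 0 < nlsProfile k x := by
  have : 0 < k + 1 := by linarith
  unfold nlsProfile
  positivity

lemma nlsProfile_rpow_two_mul_add_one (hk0 : k ≠ 0) (hk : -1 < k) (x : ℝ) :
    nlsProfile k x ^ (2 * k + 1) =
      (k + 1) * (k + 1) ^ (1 / (2 * k)) * cosh (k * x) ^ (-1 / k - 2) := by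
  have hk1 : 0 < k + 1 := by linarith
  have hy := cosh_pos (k * x)
  have hc_exp : 1 / (2 * k) * (2 * k + 1) = 1 + 1 / (2 * k) := by field_simp
  have hp_exp : -1 / k * (2 * k + 1) = -1 / k - 2 := by field_simp; ring
  rw [nlsProfile, mul_rpow (by positivity) (by positivity), ← rpow_mul hk1.le, ← rpow_mul hy.le,
    hc_exp, hp_exp, rpow_add hk1, rpow_one]

lemma deriv_deriv_nlsProfile (hk0 : k ≠ 0) (hk : -1 < k) (x : ℝ) :
    deriv (deriv (nlsProfile k)) x = nlsProfile k x - nlsProfile k x ^ (2 * k + 1) := by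
  rw [nlsProfile_rpow_two_mul_add_one hk0 hk]
  unfold nlsProfile
  rw [deriv_deriv_const_mul_cosh_mul_rpow]
  field_simp
  ring

end NLSProfile

theorem nls_profile_1d (k : ℝ) (hk : 0 < k) (F : ℝ → ℝ)
    (hF : ∀ x, F x = ((k + 1) / (Real.cosh (k * x)) ^ 2) ^ (1 / (2 * k))) :
    ∀ x : ℝ, 0 < F x ∧ -(deriv (deriv F) x) - F x ^ (2 * k + 1) = -F x := by
  have hF_eq : F = nlsProfile k := funext fun x => by
    rw [hF, div_sq_rpow_one_div_two_mul (by linarith) (cosh_pos _), nlsProfile]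
  subst hF_eq
  intro x
  refine ⟨nlsProfile_pos (by linarith) x, ?_⟩
  rw [deriv_deriv_nlsProfile hk.ne' (by linarith)]
  ring
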